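/- (Theorem 3) Define a_t = max_{1 ≤ i,j ≤ n} ‖y_i^(t) − y_j^(t)‖₂, the maximum pairwise Euclidean distance among the WBMS iterates at step t. Then the sequence (a_t) converges, and consequently for every pre-fixed tolerance δ > 0 there exists T ∈ ℕ such that |a_{t+1} − a_t| < δ for all t ≥ T. -/

import Mathlib

/-!
Each WBMS update replaces every point by a convex combination, with softmax weights, of the
current points, so the new configuration lies in the convex hull of the old one. Taking convex
hulls does not increase the diameter, and `a_t` is exactly the diameter of the configuration at
step `t`; hence `(a_t)` is nonincreasing and nonnegative, so it converges, and the consecutive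
differences of a convergent sequence tend to zero.
-/

open Filter Metric Set Topology

theorem iSup_iSup_dist_eq_diam_range {α ι : Type*} [PseudoMetricSpace α] [Finite ι]
    (z : ι → α) : ⨆ i, ⨆ j, dist (z i) (z j) = diam (range z) := by
  have hbdd := (finite_range z).isBounded
  refine le_antisymm (Real.iSup_le (fun i => Real.iSup_le (fun j => ?_) diam_nonneg) diam_nonneg)
    (diam_le_of_forall_dist_le (Real.iSup_nonneg fun i => Real.iSup_nonneg fun j => dist_nonneg) ?_)
  · exact dist_le_diam_of_mem hbdd (mem_range_self i) (mem_range_self j)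
  · rintro _ ⟨i, rfl⟩ _ ⟨j, rfl⟩
    exact le_ciSup_of_le (finite_range _).bddAbove i
      (le_ciSup (f := fun j => dist (z i) (z j)) (finite_range _).bddAbove j)

theorem diam_range_le_of_forall_mem_convexHull {E ι κ : Type*} [SeminormedAddCommGroup E]
    [NormedSpace ℝ E] [Finite κ] {z : κ → E} {z' : ι → E}
    (h : ∀ i, z' i ∈ convexHull ℝ (range z)) : diam (range z') ≤ diam (range z) := by
  rw [← convexHull_diam (range z)]
  exact diam_mono (range_subset_iff.2 h) (isBounded_convexHull.2 (finite_range z).isBounded)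

theorem sum_exp_div_sum_exp_smul_mem_convexHull {E ι : Type*} [AddCommGroup E] [Module ℝ E]
    [Fintype ι] [Nonempty ι] (f : ι → ℝ) (z : ι → E) :
    ∑ j, (Real.exp (f j) / ∑ k, Real.exp (f k)) • z j ∈ convexHull ℝ (range z) := by
  have hpos : 0 < ∑ k, Real.exp (f k) :=
    Finset.sum_pos (fun k _ => Real.exp_pos (f k)) Finset.univ_nonempty
  refine (convex_convexHull ℝ _).sum_mem (fun j _ => div_nonneg (Real.exp_pos _).le hpos.le) ?_
    (fun j _ => subset_convexHull ℝ _ (mem_range_self j))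
  rw [← Finset.sum_div, div_self hpos.ne']

theorem Filter.Tendsto.exists_forall_ge_abs_sub_succ_lt {u : ℕ → ℝ} {L : ℝ}
    (hu : Tendsto u atTop (𝓝 L)) {δ : ℝ} (hδ : 0 < δ) :
    ∃ T, ∀ t ≥ T, |u (t + 1) - u t| < δ := by
  have hdiff := (hu.comp (tendsto_add_atTop_nat 1)).sub hu
  rw [sub_self] at hdiff
  simpa [Real.dist_eq] using Metric.tendsto_atTop.1 hdiff δ hδ

theorem wbms_max_pairwise_distance_converges_general
    (n p : ℕ)
    (h : ℝ)
    (y : ℕ → Fin n → Fin p → ℝ) (w : ℕ → Fin p → ℝ)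
    (hy : ∀ t i, y (t + 1) i =
      ∑ j, (Real.exp (-(∑ l, w t l * (y t i l - y t j l) ^ 2) / h) /
        ∑ j' : Fin n, Real.exp (-(∑ l, w t l * (y t i l - y t j' l) ^ 2) / h)) • y t j)
    (a : ℕ → ℝ)
    (ha : ∀ t, a t = ⨆ i : Fin n, ⨆ j : Fin n,
      Real.sqrt (∑ l, (y t i l - y t j l) ^ 2)) :
    (∃ L : ℝ, Filter.Tendsto a Filter.atTop (nhds L)) ∧
      ∀ δ : ℝ, 0 < δ → ∃ T : ℕ, ∀ t ≥ T, |a (t + 1) - a t| < δ := by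
  set Y : ℕ → Fin n → EuclideanSpace ℝ (Fin p) := fun t i => WithLp.toLp 2 (y t i)
  have ha_diam : ∀ t, a t = diam (range (Y t)) := fun t => by
    simp [ha t, ← iSup_iSup_dist_eq_diam_range, Y, EuclideanSpace.dist_eq, Real.dist_eq]
  have hstep : ∀ t i, Y (t + 1) i ∈ convexHull ℝ (range (Y t)) := fun t i => by
    have : Nonempty (Fin n) := ⟨i⟩
    simpa [Y, hy t i] using
      sum_exp_div_sum_exp_smul_mem_convexHull
        (fun j => -(∑ l, w t l * (y t i l - y t j l) ^ 2) / h) (Y t)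
  have hanti : Antitone a := antitone_nat_of_succ_le fun t => by
    rw [ha_diam, ha_diam]
    exact diam_range_le_of_forall_mem_convexHull (hstep t)
  have hconv := tendsto_atTop_ciInf hanti ⟨0, by
    rintro _ ⟨t, rfl⟩
    exact (ha_diam t).symm ▸ diam_nonneg⟩
  exact ⟨⟨_, hconv⟩, fun δ hδ => hconv.exists_forall_ge_abs_sub_succ_lt hδ⟩

/-- Theorem 3: the maximum pairwise Euclidean distance `a_t`
among the WBMS iterates converges, and hence for any tolerance `δ > 0` there is
`T` with `|a_{t+1} − a_t| < δ` for all `t ≥ T`. -/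
theorem wbms_max_pairwise_distance_converges
    (n p : ℕ) (hn : 0 < n) (hp : 0 < p)
    (x : Fin n → Fin p → ℝ) (h lam : ℝ) (hh : 0 < h) (hlam : 0 < lam)
    (y : ℕ → Fin n → Fin p → ℝ) (w : ℕ → Fin p → ℝ)
    (hy0 : ∀ i, y 0 i = x i)
    (hw : ∀ t l, w t l =
      Real.exp (-(1 / (n * lam)) * ∑ i, (x i l - y t i l) ^ 2) /
        ∑ l' : Fin p, Real.exp (-(1 / (n * lam)) * ∑ i, (x i l' - y t i l') ^ 2))
    (hy : ∀ t i, y (t + 1) i =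
      ∑ j, (Real.exp (-(∑ l, w t l * (y t i l - y t j l) ^ 2) / h) /
        ∑ j' : Fin n, Real.exp (-(∑ l, w t l * (y t i l - y t j' l) ^ 2) / h)) • y t j)
    (a : ℕ → ℝ)
    (ha : ∀ t, a t = ⨆ i : Fin n, ⨆ j : Fin n,
      Real.sqrt (∑ l, (y t i l - y t j l) ^ 2)) :
    (∃ L : ℝ, Filter.Tendsto a Filter.atTop (nhds L)) ∧
      ∀ δ : ℝ, 0 < δ → ∃ T : ℕ, ∀ t ≥ T, |a (t + 1) - a t| < δ :=
  wbms_max_pairwise_distance_converges_general n p h y w hy a ha
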